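/- arXiv:2501.11076 — 3 statements merged into one kernel-verified Lean document; each statement's English description precedes it below -/
import Mathlib

section
/- Let g : ℕ → ℝ be completely multiplicative with g(p) ∈ {−1, +1} for every prime p, and define f : ℕ → ℝ by f(n) = g(n) if n is squarefree and f(n) = 0 otherwise. Then for every real x ≥ 1, ∑_{n ≤ x} g(n) = √x · ∑_{a ≤ x} f(a)/√a − ∑_{a ≤ x} {√(x/a)} f(a), where {u} = u − ⌊u⌋ denotes the fractional part. -/
/-!
Write each `n ≤ x` uniquely as `n = a b²` with `a` squarefree. Since `g(b)² = 1`, we get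
`g(n) = g(a) = f(a)`, so `∑_{n ≤ x} g(n) = ∑_{a ≤ x} f(a) · #{b ≥ 1 : a b² ≤ x}`, and that count is
`⌊√(x/a)⌋ = √x/√a − {√(x/a)}`.
-/

open Finset

lemma Nat.factorization_mul_sq_mod_two {a b : ℕ} (ha : Squarefree a) (hb : b ≠ 0) (p : ℕ) :
    (a * b ^ 2).factorization p % 2 = a.factorization p := by
  have hle := (Nat.squarefree_iff_factorization_le_one ha.ne_zero).mp ha p
  rw [Nat.factorization_mul ha.ne_zero (pow_ne_zero _ hb), Nat.factorization_pow]
  simp only [Finsupp.coe_add, Finsupp.coe_smul, Pi.add_apply, Pi.smul_apply, smul_eq_mul]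
  omega

lemma Nat.eq_of_squarefree_mul_sq_eq {a₁ b₁ a₂ b₂ : ℕ} (ha₁ : Squarefree a₁)
    (ha₂ : Squarefree a₂) (hb₁ : b₁ ≠ 0) (hb₂ : b₂ ≠ 0) (h : a₁ * b₁ ^ 2 = a₂ * b₂ ^ 2) :
    a₁ = a₂ ∧ b₁ = b₂ := by
  have ha : a₁ = a₂ := Nat.factorization_inj ha₁.ne_zero ha₂.ne_zero <| Finsupp.ext fun p => by
    rw [← Nat.factorization_mul_sq_mod_two ha₁ hb₁, h, Nat.factorization_mul_sq_mod_two ha₂ hb₂]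
  subst ha
  exact ⟨rfl, Nat.pow_left_injective two_ne_zero <|
    Nat.eq_of_mul_eq_mul_left (Nat.pos_of_ne_zero ha₁.ne_zero) h⟩

lemma Finset.sum_Icc_eq_sum_squarefree_mul_sq {M : Type*} [AddCommMonoid M] (h : ℕ → M)
    (N : ℕ) :
    ∑ n ∈ Icc 1 N, h n =
      ∑ a ∈ Icc 1 N with Squarefree a, ∑ b ∈ Icc 1 N with a * b ^ 2 ≤ N, h (a * b ^ 2) := by
  rw [← Finset.sum_finset_product
    ((Icc 1 N ×ˢ Icc 1 N).filter fun p => Squarefree p.1 ∧ p.1 * p.2 ^ 2 ≤ N) _ _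
    (fun p => by simp only [mem_filter, mem_product]; tauto) (f := fun p => h (p.1 * p.2 ^ 2))]
  symm
  refine Finset.sum_nbij (fun p => p.1 * p.2 ^ 2) ?_ ?_ ?_ (fun _ _ => rfl)
  · rintro ⟨a, b⟩ hp
    simp only [mem_filter, mem_product, mem_Icc] at hp ⊢
    exact ⟨Nat.mul_pos (by omega) (pow_pos (by omega) 2), hp.2.2⟩
  · rintro ⟨a₁, b₁⟩ hp₁ ⟨a₂, b₂⟩ hp₂ h
    simp only [coe_filter, mem_product, mem_Icc, Set.mem_ofPred_eq] at hp₁ hp₂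
    obtain ⟨rfl, rfl⟩ :=
      Nat.eq_of_squarefree_mul_sq_eq hp₁.2.1 hp₂.2.1 (by omega) (by omega) h
    rfl
  · intro n hn
    simp only [coe_Icc, Set.mem_Icc] at hn
    obtain ⟨a, b, ha, hb, rfl, hsq⟩ := Nat.sq_mul_squarefree_of_pos (by omega : 0 < n)
    rw [mul_comm] at hn
    refine ⟨(a, b), ?_, mul_comm _ _⟩
    have ha_le : a ≤ a * b ^ 2 := Nat.le_mul_of_pos_right _ (pow_pos hb 2)
    have hb_le : b ≤ a * b ^ 2 :=
      (Nat.le_self_pow two_ne_zero b).trans (Nat.le_mul_of_pos_left _ ha)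
    simp only [coe_filter, mem_product, mem_Icc, Set.mem_ofPred_eq]
    exact ⟨⟨⟨ha, by omega⟩, hb, by omega⟩, hsq, hn.2⟩

lemma Nat.le_floor_sqrt_div_iff {x : ℝ} {a b : ℕ} (ha : 0 < a) (hb : b ≠ 0) :
    b ≤ ⌊√(x / a)⌋₊ ↔ a * b ^ 2 ≤ ⌊x⌋₊ := by
  have ha' : (0 : ℝ) < a := by exact_mod_cast ha
  rw [Nat.le_floor_iff (Real.sqrt_nonneg _), Real.le_sqrt' (by positivity),
    Nat.le_floor_iff' (by positivity), le_div_iff₀ ha', mul_comm]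
  norm_cast

lemma Finset.filter_Icc_mul_sq_le_floor {x : ℝ} {a : ℕ} (ha : 0 < a) :
    {b ∈ Icc 1 ⌊x⌋₊ | a * b ^ 2 ≤ ⌊x⌋₊} = Icc 1 ⌊√(x / a)⌋₊ := by
  ext b
  simp only [mem_filter, mem_Icc]
  constructor
  · rintro ⟨⟨hb, -⟩, hab⟩
    exact ⟨hb, (Nat.le_floor_sqrt_div_iff ha (by omega)).2 hab⟩
  · rintro ⟨hb, hab⟩
    have hab := (Nat.le_floor_sqrt_div_iff ha (by omega)).1 hab
    have : b ≤ a * b ^ 2 :=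
      (Nat.le_self_pow two_ne_zero b).trans (Nat.le_mul_of_pos_left _ ha)
    omega

lemma Nat.floor_eq_sub_fract {R : Type*} [Ring R] [LinearOrder R] [FloorRing R]
    [IsStrictOrderedRing R] {r : R} (hr : 0 ≤ r) : (⌊r⌋₊ : R) = r - Int.fract r := by
  rw [natCast_floor_eq_intCast_floor hr, Int.self_sub_fract]

lemma sq_eq_one_of_forall_prime_sq_eq_one {M : Type*} [CommMonoid M] (g : ℕ → M) (hg1 : g 1 = 1)
    (hgmul : ∀ m n : ℕ, 0 < m → 0 < n → g (m * n) = g m * g n)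
    (hgp : ∀ p : ℕ, p.Prime → g p ^ 2 = 1) {n : ℕ} (hn : 0 < n) : g n ^ 2 = 1 := by
  induction n using Nat.recOnMul with
  | zero => omega
  | one => rw [hg1, one_pow]
  | prime p hp => exact hgp p hp
  | mul a b iha ihb =>
    obtain ⟨ha, hb⟩ := CanonicallyOrderedAdd.mul_pos.mp hn
    rw [hgmul a b ha hb, mul_pow, iha ha, ihb hb, one_mul]

theorem unweighted_to_weighted_identity_general
    (g : ℕ → ℝ) (hg1 : g 1 = 1)
    (hgmul : ∀ m n : ℕ, 0 < m → 0 < n → g (m * n) = g m * g n)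
    (hgp : ∀ p : ℕ, p.Prime → g p = 1 ∨ g p = -1)
    (f : ℕ → ℝ) (hfdef : ∀ n, f n = if Squarefree n then g n else 0)
    (x : ℝ) :
    ∑ n ∈ Finset.Icc 1 ⌊x⌋₊, g n =
      Real.sqrt x * ∑ a ∈ Finset.Icc 1 ⌊x⌋₊, f a / Real.sqrt a
        - ∑ a ∈ Finset.Icc 1 ⌊x⌋₊, Int.fract (Real.sqrt (x / (a : ℝ))) * f a := by
  have hg_sq : ∀ n, 0 < n → g n ^ 2 = 1 := fun n =>
    sq_eq_one_of_forall_prime_sq_eq_one g hg1 hgmul fun p hp => by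
      rcases hgp p hp with h | h <;> simp [h]
  have hg_mul_sq : ∀ a b, 0 < a → 0 < b → g (a * b ^ 2) = g a := fun a b ha hb => by
    rw [hgmul a _ ha (pow_pos hb 2), sq, hgmul b b hb hb, ← sq, hg_sq b hb, mul_one]
  have hcount : ∀ a ∈ Icc 1 ⌊x⌋₊, Squarefree a →
      ∑ b ∈ Icc 1 ⌊x⌋₊ with a * b ^ 2 ≤ ⌊x⌋₊, g (a * b ^ 2) = ⌊√(x / a)⌋₊ * f a := by
    intro a ha hsq
    have ha : 0 < a := (mem_Icc.1 ha).1
    rw [filter_Icc_mul_sq_le_floor ha, sum_congr rfl fun b hb => hg_mul_sq a b ha (mem_Icc.1 hb).1,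
      sum_const, Nat.card_Icc, nsmul_eq_mul, hfdef, if_pos hsq, Nat.add_sub_cancel]
  calc ∑ n ∈ Icc 1 ⌊x⌋₊, g n
      = ∑ a ∈ Icc 1 ⌊x⌋₊ with Squarefree a, (⌊√(x / a)⌋₊ : ℝ) * f a := by
        rw [sum_Icc_eq_sum_squarefree_mul_sq]
        exact sum_congr rfl fun a ha => hcount a (mem_filter.1 ha).1 (mem_filter.1 ha).2
    _ = ∑ a ∈ Icc 1 ⌊x⌋₊, (⌊√(x / a)⌋₊ : ℝ) * f a :=
        sum_filter_of_ne fun a _ h => by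
          by_contra hsq
          simp [hfdef, hsq] at h
    _ = _ := by
        rw [mul_sum, ← sum_sub_distrib]
        refine sum_congr rfl fun a _ => ?_
        rw [Nat.floor_eq_sub_fract (Real.sqrt_nonneg _), Real.sqrt_div' x (Nat.cast_nonneg a)]
        ring

/-- For a completely multiplicative `g` taking values `±1` on primes, with `f` its
restriction to squarefree integers, one has
`∑_{n ≤ x} g(n) = √x ∑_{a ≤ x} f(a)/√a − ∑_{a ≤ x} {√(x/a)} f(a)`. -/
theorem unweighted_to_weighted_identity
    (g : ℕ → ℝ) (hg1 : g 1 = 1)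
    (hgmul : ∀ m n : ℕ, 0 < m → 0 < n → g (m * n) = g m * g n)
    (hgp : ∀ p : ℕ, p.Prime → g p = 1 ∨ g p = -1)
    (f : ℕ → ℝ) (hfdef : ∀ n, f n = if Squarefree n then g n else 0)
    (x : ℝ) (hx : 1 ≤ x) :
    ∑ n ∈ Finset.Icc 1 ⌊x⌋₊, g n =
      Real.sqrt x * ∑ a ∈ Finset.Icc 1 ⌊x⌋₊, f a / Real.sqrt a
        - ∑ a ∈ Finset.Icc 1 ⌊x⌋₊, Int.fract (Real.sqrt (x / (a : ℝ))) * f a :=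
  unweighted_to_weighted_identity_general g hg1 hgmul hgp f hfdef x
end

section
/- Let (f(p))_{p prime} be independent random variables each taking the values +1 and −1 with probability 1/2. There exists an absolute constant B > 0 such that for all sufficiently large real T, setting σ = log log T / log T, one has ℙ( ∑_{p ≤ T} 2 f(p) p^{−1/2−σ} > (log log T)^{0.99} ) ≤ exp( −(log log T)^{0.98}/8 + B (log log T)^{0.97} ), where the sum runs over primes p ≤ T. -/
/-!
Each term `2 f(p) p^{-1/2-σ}` is a symmetric `±c_p` variable, hence sub-Gaussian with variance
proxy `c_p² = 4 p^{-1-2σ}`, and by independence Hoeffding's inequality bounds the probability that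
the sum exceeds `a` by `exp(-a² / (2 ∑ c_p²))`. The Euler product gives
`∑_p p^{-s} ≤ log ζ(s) ≤ log (s / (s - 1))`, which for `s = 1 + 2σ` is
`log (1 + log T / (2 log log T)) ≤ log log T`. With `a = (log log T)^{0.99}` the exponent is
exactly `-(log log T)^{0.98} / 8`.
-/

open MeasureTheory ProbabilityTheory Finset
open scoped ENNReal NNReal Classical

/-- Independent Rademacher random variables indexed by the primes. -/
def IsRademacherSystem {Ω : Type*} [MeasurableSpace Ω] (μ : Measure Ω) (f : ℕ → Ω → ℝ) : Prop :=
  (∀ p, Measurable (f p)) ∧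
  iIndepFun (fun p : {p : ℕ // p.Prime} => f p.1) μ ∧
  (∀ p : ℕ, p.Prime → μ {ω | f p ω = 1} = 1/2 ∧ μ {ω | f p ω = -1} = 1/2)

lemma tsum_nat_rpow_neg_le_div_sub_one {s : ℝ} (hs : 1 < s) :
    ∑' n : ℕ, (n : ℝ) ^ (-s) ≤ s / (s - 1) := by
  have hsum : Summable fun n : ℕ => (n : ℝ) ^ (-s) := Real.summable_nat_rpow.mpr (by linarith)
  have hshift : ∑' n : ℕ, (n : ℝ) ^ (-s) = ∑' n : ℕ, 1 / (n + 1 : ℝ) ^ s := by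
    rw [hsum.tsum_eq_zero_add]
    simp only [Nat.cast_zero, Real.zero_rpow (by linarith : -s ≠ 0), zero_add, Nat.cast_add,
      Nat.cast_one]
    exact tsum_congr fun n => by rw [one_div, Real.rpow_neg (by positivity)]
  -- `termTSum s = 1 / (s - 1) - ζ(s) / s` is a sum of nonnegative Euler–Maclaurin remainders.
  have hremainder : 0 ≤ ZetaAsymptotics.termTSum s :=
    tsum_nonneg fun n => ZetaAsymptotics.term_nonneg _ _
  rw [ZetaAsymptotics.termTSum_of_lt hs] at hremainder
  have hs₀ : 0 < s := by linarith
  have hs₁ : 0 < s - 1 := by linarith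
  have := mul_le_mul_of_nonneg_left (sub_nonneg.mp hremainder) (mul_nonneg hs₀.le hs₁.le)
  field_simp at this
  rw [hshift, le_div_iff₀ hs₁]
  linarith

noncomputable def natRpowMonoidHom (s : ℝ) : ℕ →* ℝ where
  toFun n := (n : ℝ) ^ s
  map_one' := by simp
  map_mul' m n := by push_cast; exact Real.mul_rpow (Nat.cast_nonneg m) (Nat.cast_nonneg n)

lemma sum_le_log_tsum_of_forall_prime {f : ℕ →* ℝ} (hf : ∀ n, 0 ≤ f n) (hsum : Summable f)
    {s : Finset ℕ} (hs : ∀ p ∈ s, p.Prime) : ∑ p ∈ s, f p ≤ Real.log (∑' n, f n) := by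
  set N := s.sup id + 1
  have hsN : s ⊆ N.primesBelow := fun p hp =>
    Nat.mem_primesBelow.mpr ⟨Nat.lt_succ_of_le (le_sup (f := id) hp), hs p hp⟩
  have hlt : ∀ p ∈ N.primesBelow, 0 < 1 - f p := fun p hp => by
    have := hsum.norm_lt_one (Nat.prime_of_mem_primesBelow hp).one_lt
    rw [Real.norm_of_nonneg (hf p)] at this
    linarith
  calc ∑ p ∈ s, f p ≤ ∑ p ∈ N.primesBelow, f p :=
        sum_le_sum_of_subset_of_nonneg hsN fun p _ _ => hf p
    _ ≤ ∑ p ∈ N.primesBelow, Real.log (1 - f p)⁻¹ := sum_le_sum fun p hp => by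
        rw [Real.log_inv]; linarith [Real.log_le_sub_one_of_pos (hlt p hp)]
    _ = Real.log (∏ p ∈ N.primesBelow, (1 - f p)⁻¹) :=
        (Real.log_prod fun p hp => (inv_pos.mpr (hlt p hp)).ne').symm
    _ = Real.log (∑' m : N.smoothNumbers, f m) := by
        rw [EulerProduct.prod_primesBelow_geometric_eq_tsum_smoothNumbers hsum]
    _ ≤ Real.log (∑' n, f n) := by
        refine Real.log_le_log ?_ (Summable.tsum_subtype_le f _ hf hsum)
        rw [← EulerProduct.prod_primesBelow_geometric_eq_tsum_smoothNumbers hsum]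
        exact prod_pos fun p hp => inv_pos.mpr (hlt p hp)

lemma sum_prime_rpow_neg_le_log {s : ℝ} (hs : 1 < s) {P : Finset ℕ} (hP : ∀ p ∈ P, p.Prime) :
    ∑ p ∈ P, (p : ℝ) ^ (-s) ≤ Real.log (s / (s - 1)) := by
  have hsum : Summable (natRpowMonoidHom (-s)) := Real.summable_nat_rpow.mpr (by linarith)
  have hnonneg (n : ℕ) : 0 ≤ natRpowMonoidHom (-s) n := Real.rpow_nonneg n.cast_nonneg _
  have htsum_pos : 0 < ∑' n, natRpowMonoidHom (-s) n :=
    one_pos.trans_le <| by simpa using hsum.le_tsum 1 fun n _ => hnonneg n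
  calc ∑ p ∈ P, (p : ℝ) ^ (-s) = ∑ p ∈ P, natRpowMonoidHom (-s) p := rfl
    _ ≤ Real.log (∑' n, natRpowMonoidHom (-s) n) :=
        sum_le_log_tsum_of_forall_prime hnonneg hsum hP
    _ ≤ Real.log (s / (s - 1)) := Real.log_le_log htsum_pos (tsum_nat_rpow_neg_le_div_sub_one hs)

lemma sum_sq_two_mul_rpow_neg_half_sub_le {x : ℝ} (hx : Real.exp 1 ≤ x) {P : Finset ℕ}
    (hP : ∀ p ∈ P, p.Prime) :
    ∑ p ∈ P, (2 * (p : ℝ) ^ (-(1 / 2 : ℝ) - Real.log x / x)) ^ 2 ≤ 4 * Real.log x := by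
  set σ := Real.log x / x
  have hx₀ : 0 < x := (Real.exp_pos 1).trans_le hx
  have hlog : 1 ≤ Real.log x := (Real.le_log_iff_exp_le hx₀).mpr hx
  have hx₂ : 2 ≤ x := le_trans (by linarith [Real.add_one_le_exp 1]) hx
  have hσ : 0 < σ := by positivity
  have hsq (p : ℕ) : (2 * (p : ℝ) ^ (-(1 / 2 : ℝ) - σ)) ^ 2 = 4 * (p : ℝ) ^ (-(1 + 2 * σ)) := by
    rw [mul_pow, ← Real.rpow_mul_natCast p.cast_nonneg]
    ring_nf
  have hratio : (1 + 2 * σ) / (1 + 2 * σ - 1) ≤ x := by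
    have hinv : 1 / (2 * σ) ≤ x / 2 := by
      rw [show 1 / (2 * σ) = x / (2 * Real.log x) by simp only [σ]; field_simp]
      exact div_le_div_of_nonneg_left hx₀.le (by norm_num) (by linarith)
    rw [add_sub_cancel_left, add_div, div_self (by positivity)]
    linarith
  calc ∑ p ∈ P, (2 * (p : ℝ) ^ (-(1 / 2 : ℝ) - σ)) ^ 2
      = 4 * ∑ p ∈ P, (p : ℝ) ^ (-(1 + 2 * σ)) := by
        rw [mul_sum]; exact sum_congr rfl fun p _ => hsq p
    _ ≤ 4 * Real.log ((1 + 2 * σ) / (1 + 2 * σ - 1)) := by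
        gcongr; exact sum_prime_rpow_neg_le_log (by linarith) hP
    _ ≤ 4 * Real.log x := by
        gcongr 4 * ?_
        exact Real.log_le_log (by rw [add_sub_cancel_left]; positivity) hratio

section Rademacher

variable {Ω : Type*} [MeasurableSpace Ω] {μ : Measure Ω} [IsProbabilityMeasure μ] {X : Ω → ℝ}

lemma ae_eq_one_or_eq_neg_one (hX : Measurable X) (h₁ : μ {ω | X ω = 1} = 1 / 2)
    (h₂ : μ {ω | X ω = -1} = 1 / 2) : ∀ᵐ ω ∂μ, X ω = 1 ∨ X ω = -1 := by
  have hm₁ : MeasurableSet {ω | X ω = 1} := hX (measurableSet_singleton 1)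
  have hm₂ : MeasurableSet {ω | X ω = -1} := hX (measurableSet_singleton (-1))
  have hdisj : Disjoint {ω | X ω = 1} {ω | X ω = -1} :=
    Set.disjoint_left.mpr fun ω (h : X ω = 1) (h' : X ω = -1) => by norm_num [h] at h'
  refine (ae_iff_measure_eq ?_).mpr ?_
  · rw [Set.ofPred_or]; exact (hm₁.union hm₂).nullMeasurableSet
  rw [Set.ofPred_or, measure_union hdisj hm₂, h₁, h₂, ENNReal.add_halves, measure_univ]

lemma integral_eq_zero_of_measure_eq_one_half (hX : Measurable X)
    (h₁ : μ {ω | X ω = 1} = 1 / 2) (h₂ : μ {ω | X ω = -1} = 1 / 2) : μ[X] = 0 := by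
  have hm₁ : MeasurableSet {ω | X ω = 1} := hX (measurableSet_singleton 1)
  have hX_eq : X =ᵐ[μ] fun ω => 2 * Set.indicator {ω | X ω = 1} 1 ω - 1 := by
    filter_upwards [ae_eq_one_or_eq_neg_one hX h₁ h₂] with ω hω
    rcases hω with hω | hω <;> norm_num [Set.indicator, hω]
  rw [integral_congr_ae hX_eq, integral_sub ((integrable_indicator_iff hm₁).mpr
    (integrable_const 1).integrableOn |>.const_mul 2) (integrable_const 1), integral_const_mul,
    integral_indicator_one hm₁, measureReal_def, h₁]
  simp

lemma hasSubgaussianMGF_of_measure_eq_one_half (hX : Measurable X)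
    (h₁ : μ {ω | X ω = 1} = 1 / 2) (h₂ : μ {ω | X ω = -1} = 1 / 2) :
    HasSubgaussianMGF X 1 μ := by
  have hIcc : ∀ᵐ ω ∂μ, X ω ∈ Set.Icc (-1) 1 := by
    filter_upwards [ae_eq_one_or_eq_neg_one hX h₁ h₂] with ω hω
    rcases hω with hω | hω <;> norm_num [hω]
  convert hasSubgaussianMGF_of_mem_Icc_of_integral_eq_zero hX.aemeasurable hIcc
    (integral_eq_zero_of_measure_eq_one_half hX h₁ h₂)
  ext; norm_num

end Rademacher

lemma ProbabilityTheory.HasSubgaussianMGF.mono {Ω : Type*} [MeasurableSpace Ω] {μ : Measure Ω}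
    {X : Ω → ℝ} {c c' : ℝ≥0} (h : HasSubgaussianMGF X c μ) (hc : c ≤ c') :
    HasSubgaussianMGF X c' μ :=
  ⟨h.integrable_exp_mul, fun t => (h.mgf_le t).trans <| Real.exp_le_exp.mpr <| by gcongr⟩

lemma IsRademacherSystem.measureReal_sum_ge_le {Ω : Type*} [MeasurableSpace Ω] {μ : Measure Ω}
    [IsProbabilityMeasure μ] {f : ℕ → Ω → ℝ} (hf : IsRademacherSystem μ f) {P : Finset ℕ}
    (hP : ∀ p ∈ P, p.Prime) (c : ℕ → ℝ) {V : ℝ} (hV : ∑ p ∈ P, c p ^ 2 ≤ V) {ε : ℝ}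
    (hε : 0 ≤ ε) : μ.real {ω | ε ≤ ∑ p ∈ P, c p * f p ω} ≤ Real.exp (-ε ^ 2 / (2 * V)) := by
  obtain ⟨hmeas, hindep, hhalf⟩ := hf
  have hsubG (q : {p : ℕ // p.Prime}) :
      HasSubgaussianMGF (fun ω => c q * f q ω) (c q ^ 2).toNNReal μ := by
    convert (hasSubgaussianMGF_of_measure_eq_one_half (hmeas q) (hhalf q q.2).1
      (hhalf q q.2).2).const_mul (c q) using 2
    ext
    rw [Real.coe_toNNReal _ (sq_nonneg _)]
    exact (mul_one _).symm
  have hindepX : iIndepFun (fun (q : {p : ℕ // p.Prime}) ω => c q * f q ω) μ :=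
    hindep.comp (fun q x => c q * x) fun q => measurable_id.const_mul _
  have hsum := HasSubgaussianMGF.sum_of_iIndepFun hindepX (s := P.subtype Nat.Prime)
    fun q _ => hsubG q
  rw [show (fun ω => ∑ q ∈ P.subtype Nat.Prime, c q * f q ω) = fun ω => ∑ p ∈ P, c p * f p ω
    from funext fun ω => sum_subtype_of_mem (fun p => c p * f p ω) hP] at hsum
  have hV₀ : 0 ≤ V := (sum_nonneg fun p _ => sq_nonneg (c p)).trans hV
  rw [← Real.coe_toNNReal V hV₀]
  refine (hsum.mono ?_).measure_ge_le hε
  rw [← NNReal.coe_le_coe, NNReal.coe_sum, Real.coe_toNNReal V hV₀]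
  simpa [sq_nonneg, sum_subtype_of_mem (fun p => c p ^ 2) hP] using hV

lemma rpow_sq_div_self {x : ℝ} (hx : 0 < x) (a : ℝ) : (x ^ a) ^ 2 / x = x ^ (2 * a - 1) := by
  rw [← Real.rpow_mul_natCast hx.le, Real.rpow_sub hx, Real.rpow_one]
  ring_nf

/-- A Chernoff-type bound: for sufficiently large `T` and `σ = log log T / log T`,
`ℙ(∑_{p ≤ T} 2 f(p) p^{−1/2−σ} > (log log T)^{0.99})
  ≤ exp(−(log log T)^{0.98}/8 + B (log log T)^{0.97})`. -/
theorem chernoff_prime_sum_bound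
    {Ω : Type*} [MeasurableSpace Ω] (μ : Measure Ω) [IsProbabilityMeasure μ]
    (f : ℕ → Ω → ℝ) (hf : IsRademacherSystem μ f) :
    ∃ B : ℝ, 0 < B ∧ ∃ T₀ : ℝ, ∀ T : ℝ, T₀ ≤ T →
      μ {ω | Real.log (Real.log T) ^ ((0.99 : ℝ)) <
          ∑ p ∈ (Finset.Icc 1 ⌊T⌋₊).filter Nat.Prime,
            2 * f p ω * (p : ℝ) ^ (-(1 / 2 : ℝ) - Real.log (Real.log T) / Real.log T)} ≤
        ENNReal.ofReal (Real.exp (-(Real.log (Real.log T) ^ ((0.98 : ℝ))) / 8 +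
          B * Real.log (Real.log T) ^ ((0.97 : ℝ)))) := by
  refine ⟨1, one_pos, Real.exp (Real.exp 1), fun T hT => ?_⟩
  set x := Real.log T
  set L := Real.log x
  set P := (Finset.Icc 1 ⌊T⌋₊).filter Nat.Prime
  set c : ℕ → ℝ := fun p => 2 * (p : ℝ) ^ (-(1 / 2 : ℝ) - L / x)
  have hx : Real.exp 1 ≤ x := (Real.le_log_iff_exp_le ((Real.exp_pos _).trans_le hT)).mpr hT
  have hL : 1 ≤ L := (Real.le_log_iff_exp_le ((Real.exp_pos _).trans_le hx)).mpr hx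
  have hP : ∀ p ∈ P, p.Prime := fun p hp => (mem_filter.mp hp).2
  have hoeffding := hf.measureReal_sum_ge_le hP c (sum_sq_two_mul_rpow_neg_half_sub_le hx hP)
    (ε := L ^ (0.99 : ℝ)) (by positivity)
  have hexponent : -(L ^ (0.99 : ℝ)) ^ 2 / (2 * (4 * L)) = -L ^ (0.98 : ℝ) / 8 := by
    rw [show 2 * (4 * L) = L * 8 by ring, neg_div, ← div_div, rpow_sq_div_self (by linarith),
      neg_div]
    norm_num
  calc μ {ω | L ^ (0.99 : ℝ) < ∑ p ∈ P, 2 * f p ω * (p : ℝ) ^ (-(1 / 2 : ℝ) - L / x)}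
      ≤ μ {ω | L ^ (0.99 : ℝ) ≤ ∑ p ∈ P, c p * f p ω} := by
        refine measure_mono fun ω hω => ?_
        rw [Set.mem_ofPred_eq] at hω ⊢
        exact (hω.trans_eq (sum_congr rfl fun p _ => mul_right_comm _ _ _)).le
    _ = ENNReal.ofReal (μ.real {ω | L ^ (0.99 : ℝ) ≤ ∑ p ∈ P, c p * f p ω}) :=
        (ofReal_measureReal).symm
    _ ≤ ENNReal.ofReal (Real.exp (-L ^ (0.98 : ℝ) / 8 + 1 * L ^ (0.97 : ℝ))) := by
        refine ENNReal.ofReal_le_ofReal (hoeffding.trans ?_)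
        rw [hexponent]
        gcongr
        linarith [Real.rpow_nonneg (by positivity : 0 ≤ L) 0.97]
end

section
/- Let (f(p))_{p prime} be independent random variables each taking the values +1 and −1 with probability 1/2. There exists an absolute constant C > 0 such that for every real t with 0 < |t| ≤ 1/10, setting z = exp(1/|t|), and for every real σ with −1/log(z) ≤ σ ≤ 1/log(z), one has E( ∏_{p ≤ z} | (1 + f(p) p^{−1/2−σ−it}) / (1 + f(p) p^{−1/2−σ}) |² ) ≤ C, where the product runs over primes p ≤ z. -/
/-!
Independence factors the expectation over the primes `p ≤ z`, and averaging over `f(p) = ±1`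
turns the factor at `p` into `1 + 2‖a - w‖² / (1 - a²)²`, where `a = p^(-1/2-σ)` and
`w = p^(-1/2-σ-it)`, so that `‖w‖ = a`. As `a ≤ 4/5` and `‖a - w‖ ≤ a |t| log p`, the factor is at
most `exp (16 t² (log p)² p^(-1-2σ))`. For `p ≤ z` and `σ ≥ -1/log z` we have `p^(-2σ) ≤ e²`, and
a dyadic decomposition with Chebyshev's bound `θ(x) ≤ x log 4` gives `∑_{p ≤ z} log p / p ≪ log z`,
so the exponent is `≪ t² (log z)² = 1`.
-/

open MeasureTheory ProbabilityTheory Finset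
open scoped ENNReal Classical

open Real

section Rademacher

variable {Ω E : Type*} [MeasurableSpace Ω] {μ : Measure Ω}
  [NormedAddCommGroup E] [NormedSpace ℝ E] [CompleteSpace E]

theorem integral_comp_eq_of_measure_eq_half [IsProbabilityMeasure μ] {X : Ω → ℝ}
    (hX : Measurable X) (h1 : μ {ω | X ω = 1} = 1 / 2) (h2 : μ {ω | X ω = -1} = 1 / 2)
    (g : ℝ → E) : ∫ ω, g (X ω) ∂μ = (2 : ℝ)⁻¹ • (g 1 + g (-1)) := by
  set A := {ω | X ω = 1}
  set B := {ω | X ω = -1}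
  have hA : MeasurableSet A := hX (measurableSet_singleton 1)
  have hB : MeasurableSet B := hX (measurableSet_singleton (-1))
  have hAB : Disjoint A B := Set.disjoint_left.2 fun ω (h₁ : X ω = 1) (h₂ : X ω = -1) => by
    linarith
  have hfull : ∀ᵐ ω ∂μ, ω ∈ A ∪ B := by
    rw [ae_iff, ← Set.compl_def, prob_compl_eq_zero_iff (hA.union hB), measure_union hAB hB,
      h1, h2, ENNReal.add_halves]
  have hg : (fun ω => g (X ω)) =ᵐ[μ]
      A.indicator (fun _ => g 1) + B.indicator (fun _ => g (-1)) := by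
    filter_upwards [hfull] with ω hω
    rcases hω with hω | hω
    · simp [hω, Set.indicator_of_notMem (Set.disjoint_left.1 hAB hω), show X ω = 1 from hω]
    · simp [hω, Set.indicator_of_notMem (Set.disjoint_right.1 hAB hω), show X ω = -1 from hω]
  rw [integral_congr_ae hg, integral_add' ((integrable_const _).indicator hA)
    ((integrable_const _).indicator hB), integral_indicator_const _ hA,
    integral_indicator_const _ hB, measureReal_def, measureReal_def, h1, h2, smul_add]
  norm_num

theorem IsRademacherSystem.integral_prod_comp {f : ℕ → Ω → ℝ} (hf : IsRademacherSystem μ f)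
    {s : Finset ℕ} (hs : ∀ p ∈ s, p.Prime) {g : ℕ → ℝ → ℝ} (hg : ∀ p, Measurable (g p)) :
    ∫ ω, ∏ p ∈ s, g p (f p ω) ∂μ = ∏ p ∈ s, (g p 1 + g p (-1)) / 2 := by
  obtain ⟨hmeas, hindep, hhalf⟩ := hf
  have := hindep.isProbabilityMeasure
  have hindep_s : iIndepFun (fun p : s => f p) μ :=
    hindep.precomp (g := fun p : s => ⟨p, hs p p.2⟩)
      fun _ _ h => Subtype.ext (Subtype.mk.inj h)
  simp_rw [← Finset.prod_coe_sort s]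
  rw [hindep_s.integral_fun_prod_comp (fun p => (hmeas p).aemeasurable)
    (fun p => (hg p).aestronglyMeasurable)]
  refine Finset.prod_congr rfl fun p _ => ?_
  obtain ⟨hp1, hp2⟩ := hhalf p (hs p p.2)
  rw [integral_comp_eq_of_measure_eq_half (hmeas p) hp1 hp2, smul_eq_mul, inv_mul_eq_div]

end Rademacher

noncomputable def ratioSq (w b : ℂ) (x : ℝ) : ℝ := ‖(1 + x * w) / (1 + x * b)‖ ^ 2

theorem measurable_ratioSq (w b : ℂ) : Measurable (ratioSq w b) := by
  unfold ratioSq; fun_prop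

theorem sq_norm_add_mul_of_norm_eq {w : ℂ} {a : ℝ} (hw : ‖w‖ = |a|) (x y : ℝ) :
    ‖y + x * w‖ ^ 2 = y ^ 2 + 2 * x * y * w.re + x ^ 2 * a ^ 2 := by
  have hw2 : w.re ^ 2 + w.im ^ 2 = a ^ 2 := by
    rw [← sq_abs a, ← hw, Complex.sq_norm, Complex.normSq_apply]; ring
  rw [Complex.sq_norm, Complex.normSq_apply]
  simp only [Complex.add_re, Complex.add_im, Complex.mul_re, Complex.mul_im, Complex.ofReal_re,
    Complex.ofReal_im]
  linear_combination x ^ 2 * hw2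

theorem ratioSq_mean_eq {w : ℂ} {a : ℝ} (hw : ‖w‖ = |a|) (ha : |a| < 1) :
    (ratioSq w a 1 + ratioSq w a (-1)) / 2 = 1 + 2 * ‖(a : ℂ) - w‖ ^ 2 / (1 - a ^ 2) ^ 2 := by
  have h1 : 1 + a ≠ 0 := by linarith [neg_abs_le a]
  have h2 : 1 - a ≠ 0 := by linarith [le_abs_self a]
  have h3 : 1 - a ^ 2 ≠ 0 := by
    rw [show 1 - a ^ 2 = (1 + a) * (1 - a) by ring]; exact mul_ne_zero h1 h2
  have e1 : ‖1 + w‖ ^ 2 = 1 + 2 * w.re + a ^ 2 := by simpa using sq_norm_add_mul_of_norm_eq hw 1 1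
  have e2 : ‖1 - w‖ ^ 2 = 1 - 2 * w.re + a ^ 2 := by
    simpa [← sub_eq_add_neg] using sq_norm_add_mul_of_norm_eq hw (-1) 1
  have e3 : ‖(a : ℂ) - w‖ ^ 2 = 2 * a ^ 2 - 2 * a * w.re := by
    rw [show (a : ℂ) - w = a + (-1 : ℝ) * w by push_cast; ring, sq_norm_add_mul_of_norm_eq hw]; ring
  have hden (y : ℝ) : ‖(y : ℂ)‖ ^ 2 = y ^ 2 := by rw [Complex.norm_real, Real.norm_eq_abs, sq_abs]
  simp only [ratioSq, norm_div, div_pow, Complex.ofReal_one, Complex.ofReal_neg, one_mul,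
    neg_one_mul, ← sub_eq_add_neg, e1, e2, e3]
  rw [show (1 : ℂ) + a = (1 + a : ℝ) by push_cast; ring,
    show (1 : ℂ) - a = (1 - a : ℝ) by push_cast; ring, hden, hden]
  field_simp
  ring

theorem ratioSq_mean_le {w : ℂ} {a : ℝ} (hw : ‖w‖ = |a|) (ha : |a| ≤ 4 / 5) :
    (ratioSq w a 1 + ratioSq w a (-1)) / 2 ≤ 1 + 16 * ‖(a : ℂ) - w‖ ^ 2 := by
  rw [ratioSq_mean_eq hw (by linarith)]
  have hden : 81 / 625 ≤ (1 - a ^ 2) ^ 2 := by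
    have : a ^ 2 ≤ 16 / 25 := by nlinarith [sq_abs a, abs_nonneg a]
    nlinarith
  have := sq_nonneg ‖(a : ℂ) - w‖
  rw [add_le_add_iff_left, div_le_iff₀ (by linarith)]
  nlinarith

theorem natCast_cpow_neg_ofReal (n : ℕ) (s : ℝ) :
    (n : ℂ) ^ (-(s : ℂ)) = ((n : ℝ) ^ (-s) : ℝ) := by
  rw [← Complex.ofReal_natCast, ← Complex.ofReal_neg, Complex.ofReal_cpow n.cast_nonneg]

theorem norm_natCast_cpow_neg_add_mul_I {n : ℕ} (hn : 0 < n) (s t : ℝ) :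
    ‖(n : ℂ) ^ (-(s + t * Complex.I))‖ = (n : ℝ) ^ (-s) := by
  simp [Complex.norm_natCast_cpow_of_pos hn]

theorem norm_natCast_cpow_sub_cpow_le {n : ℕ} (hn : 0 < n) (s t : ℝ) :
    ‖(n : ℂ) ^ (-(s : ℂ)) - (n : ℂ) ^ (-(s + t * Complex.I))‖ ≤
      (n : ℝ) ^ (-s) * |t * log n| := by
  have hn' : (n : ℂ) ≠ 0 := by exact_mod_cast hn.ne'
  have hsplit : (n : ℂ) ^ (-(s + t * Complex.I)) =
      (n : ℂ) ^ (-(s : ℂ)) * Complex.exp (Complex.I * ((-(t * log n) : ℝ) : ℂ)) := by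
    rw [neg_add, Complex.cpow_add _ _ hn', Complex.cpow_def_of_ne_zero hn' (-(t * Complex.I)),
      ← Complex.natCast_log]
    push_cast; ring_nf
  rw [hsplit, ← mul_one_sub, norm_mul, norm_sub_rev, natCast_cpow_neg_ofReal, Complex.norm_real,
    Real.norm_of_nonneg (by positivity)]
  gcongr
  simpa using Real.norm_exp_I_mul_ofReal_sub_one_le (x := -(t * log n))

theorem ratioSq_natCast_cpow_mean_le {n : ℕ} (hn : 0 < n) {s : ℝ}
    (hs : (n : ℝ) ^ (-s) ≤ 4 / 5) (t : ℝ) :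
    (ratioSq ((n : ℂ) ^ (-(s + t * Complex.I))) ((n : ℂ) ^ (-(s : ℂ))) 1 +
        ratioSq ((n : ℂ) ^ (-(s + t * Complex.I))) ((n : ℂ) ^ (-(s : ℂ))) (-1)) / 2 ≤
      1 + 16 * t ^ 2 * (log n ^ 2 * (n : ℝ) ^ (-(2 * s))) := by
  have ha : 0 ≤ (n : ℝ) ^ (-s) := by positivity
  have hnorm := norm_natCast_cpow_neg_add_mul_I hn s t
  rw [← abs_of_nonneg ha] at hnorm hs
  have hdiff := norm_natCast_cpow_sub_cpow_le hn s t
  rw [natCast_cpow_neg_ofReal] at hdiff ⊢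
  refine (ratioSq_mean_le hnorm hs).trans ?_
  have : ‖(((n : ℝ) ^ (-s) : ℝ) : ℂ) - (n : ℂ) ^ (-(s + t * Complex.I))‖ ^ 2 ≤
      t ^ 2 * (log n ^ 2 * (n : ℝ) ^ (-(2 * s))) := by
    calc _ ≤ ((n : ℝ) ^ (-s) * |t * log n|) ^ 2 := by gcongr
      _ = _ := by
        rw [mul_pow, sq_abs, ← rpow_natCast, ← rpow_mul n.cast_nonneg]; push_cast; ring_nf
  linarith

theorem rpow_neg_le_four_fifths {x s : ℝ} (hx : 2 ≤ x) (hs : 2 / 5 ≤ s) :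
    x ^ (-s) ≤ 4 / 5 := by
  calc x ^ (-s) ≤ 2 ^ (-s) := rpow_le_rpow_of_nonpos two_pos hx (by linarith)
    _ ≤ 2 ^ (-(2 / 5 : ℝ)) := rpow_le_rpow_of_exponent_le one_le_two (by linarith)
    _ ≤ 4 / 5 := by
      rw [← pow_le_pow_iff_left₀ (by positivity) (by norm_num) (by norm_num : 5 ≠ 0),
        ← rpow_mul_natCast zero_le_two]
      norm_num

theorem sum_primesLE_sdiff_log_div_le {M N : ℕ} (hMN : N ≤ 2 * M + 1) :
    ∑ p ∈ Nat.primesLE N \ Nat.primesLE M, log p / p ≤ 2 * log 4 := by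
  have hterm : ∀ p ∈ Nat.primesLE N \ Nat.primesLE M, log p / p ≤ log p / (M + 1) :=
      fun p hp => by
    simp only [mem_sdiff, Nat.mem_primesLE, not_and] at hp
    have hMp : (M : ℝ) + 1 ≤ p := by
      have : ¬p ≤ M := fun h => hp.2 h hp.1.2
      exact_mod_cast (by omega : M + 1 ≤ p)
    exact div_le_div_of_nonneg_left (log_natCast_nonneg p) (by positivity) hMp
  have htheta : ∑ p ∈ Nat.primesLE N \ Nat.primesLE M, log p ≤ log 4 * N := by
    calc ∑ p ∈ Nat.primesLE N \ Nat.primesLE M, log p ≤ ∑ p ∈ Nat.primesLE N, log p :=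
          sum_le_sum_of_subset_of_nonneg sdiff_subset fun p _ _ => log_natCast_nonneg p
      _ = Chebyshev.theta N := (Chebyshev.theta_eq_sum_primesLE_log N).symm
      _ ≤ log 4 * N := Chebyshev.theta_le_log4_mul_x N.cast_nonneg
  calc ∑ p ∈ Nat.primesLE N \ Nat.primesLE M, log p / p
      ≤ ∑ p ∈ Nat.primesLE N \ Nat.primesLE M, log p / (M + 1) := sum_le_sum hterm
    _ = (∑ p ∈ Nat.primesLE N \ Nat.primesLE M, log p) / (M + 1) := (sum_div ..).symm
    _ ≤ log 4 * N / (M + 1) := by gcongr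
    _ ≤ 2 * log 4 := by
      rw [div_le_iff₀ (by positivity)]
      have : (N : ℝ) ≤ 2 * (M + 1) := by exact_mod_cast (by omega : N ≤ 2 * (M + 1))
      nlinarith [log_nonneg (by norm_num : (1 : ℝ) ≤ 4)]

theorem sum_primesLE_log_div_le (N : ℕ) :
    ∑ p ∈ Nat.primesLE N, log p / p ≤ 2 * log 4 * (Nat.log 2 N + 1) := by
  induction N using Nat.strong_induction_on with
  | _ N ih =>
  rcases lt_or_ge N 2 with hN | hN
  · interval_cases N <;> simp <;> positivity
  have hsub : Nat.primesLE (N / 2) ⊆ Nat.primesLE N := fun p hp => by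
    rw [Nat.mem_primesLE] at hp ⊢; exact ⟨hp.1.trans (Nat.div_le_self N 2), hp.2⟩
  rw [← sum_sdiff hsub, Nat.log_of_one_lt_of_le one_lt_two hN, Nat.cast_add_one]
  have := ih (N / 2) (Nat.div_lt_self (by omega) one_lt_two)
  have := sum_primesLE_sdiff_log_div_le (M := N / 2) (N := N) (by omega)
  linarith

theorem log_sq_mul_rpow_le {x L σ : ℝ} (hx : 1 ≤ x) (hL : 0 < L) (hxL : log x ≤ L)
    (hσ : -(1 / L) ≤ σ) : log x ^ 2 * x ^ (-(1 + 2 * σ)) ≤ exp 2 * L * (log x / x) := by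
  have hx0 : 0 < x := by linarith
  have hlog := log_nonneg hx
  have hpow : x ^ (-(2 * σ)) ≤ exp 2 := by
    rw [rpow_def_of_pos hx0, exp_le_exp]
    have : -(2 * σ) ≤ 2 / L := by rw [div_eq_mul_one_div]; linarith
    calc log x * -(2 * σ) ≤ log x * (2 / L) := mul_le_mul_of_nonneg_left this hlog
      _ ≤ L * (2 / L) := mul_le_mul_of_nonneg_right hxL (by positivity)
      _ = 2 := by field_simp
  rw [neg_add, rpow_add hx0, rpow_neg_one]
  calc log x ^ 2 * (x⁻¹ * x ^ (-(2 * σ))) = log x * log x / x * x ^ (-(2 * σ)) := by ring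
    _ ≤ L * log x / x * exp 2 := by gcongr
    _ = exp 2 * L * (log x / x) := by ring

theorem natLog_two_add_one_le {N : ℕ} {L : ℝ} (hL : 1 ≤ L) (hN : (N : ℝ) ≤ exp L) :
    (Nat.log 2 N : ℝ) + 1 ≤ 3 * L := by
  have hlogN : log N ≤ L := by
    rcases N.eq_zero_or_pos with rfl | hN0
    · simpa using hL.trans' zero_le_one
    · exact (log_le_iff_le_exp (by exact_mod_cast hN0)).2 hN
  have hlog2 : 1 / 2 < log 2 := by linarith [log_two_gt_d9]
  have : (Nat.log 2 N : ℝ) ≤ 2 * L := by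
    calc (Nat.log 2 N : ℝ) ≤ logb 2 N := by exact_mod_cast natLog_le_logb N 2
      _ = log N / log 2 := rfl
      _ ≤ 2 * L := by rw [div_le_iff₀ (by linarith)]; nlinarith [log_natCast_nonneg N]
  linarith

theorem sum_primesLE_log_sq_mul_rpow_le {N : ℕ} {L σ : ℝ} (hL : 1 ≤ L) (hN : (N : ℝ) ≤ exp L)
    (hσ : -(1 / L) ≤ σ) :
    ∑ p ∈ Nat.primesLE N, log p ^ 2 * (p : ℝ) ^ (-(1 + 2 * σ)) ≤ 6 * exp 2 * log 4 * L ^ 2 := by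
  have hterm : ∀ p ∈ Nat.primesLE N,
      log p ^ 2 * (p : ℝ) ^ (-(1 + 2 * σ)) ≤ exp 2 * L * (log p / p) := fun p hp => by
    have hp1 : (1 : ℝ) ≤ p := by exact_mod_cast (Nat.one_lt_of_mem_primesLE hp).le
    refine log_sq_mul_rpow_le hp1 (by linarith) ?_ hσ
    exact (log_le_iff_le_exp (by linarith)).2
      (le_trans (by exact_mod_cast Nat.le_of_mem_primesLE hp) hN)
  calc ∑ p ∈ Nat.primesLE N, log p ^ 2 * (p : ℝ) ^ (-(1 + 2 * σ))
      ≤ ∑ p ∈ Nat.primesLE N, exp 2 * L * (log p / p) := sum_le_sum hterm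
    _ = exp 2 * L * ∑ p ∈ Nat.primesLE N, log p / p := (mul_sum ..).symm
    _ ≤ exp 2 * L * (2 * log 4 * (3 * L)) := by
      gcongr
      exact (sum_primesLE_log_div_le N).trans (by gcongr; exact natLog_two_add_one_le hL hN)
    _ = 6 * exp 2 * log 4 * L ^ 2 := by ring

theorem eulerFactor_mean_le {p : ℕ} (hp : 2 ≤ p) {σ : ℝ} (hσ : -(1 / 10) ≤ σ) (t : ℝ) :
    (ratioSq ((p : ℂ) ^ (-(1 / 2 + (σ : ℂ) + (t : ℂ) * Complex.I)))
          ((p : ℂ) ^ (-(1 / 2 + (σ : ℂ)))) 1 +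
        ratioSq ((p : ℂ) ^ (-(1 / 2 + (σ : ℂ) + (t : ℂ) * Complex.I)))
          ((p : ℂ) ^ (-(1 / 2 + (σ : ℂ)))) (-1)) / 2 ≤
      1 + 16 * t ^ 2 * (log p ^ 2 * (p : ℝ) ^ (-(1 + 2 * σ))) := by
  have := ratioSq_natCast_cpow_mean_le (n := p) (s := 1 / 2 + σ) (by omega)
    (rpow_neg_le_four_fifths (by exact_mod_cast hp) (by linarith)) t
  convert this using 5 <;> push_cast <;> ring_nf

theorem short_euler_product_ratio_bounded_general
    {Ω : Type*} [MeasurableSpace Ω] (μ : Measure Ω)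
    (f : ℕ → Ω → ℝ) (hf : IsRademacherSystem μ f) :
    ∃ C : ℝ, 0 < C ∧ ∀ t : ℝ, t ≠ 0 → |t| ≤ 1/10 →
      ∀ σ : ℝ, -(1 / Real.log (Real.exp (1 / |t|))) ≤ σ →
        σ ≤ 1 / Real.log (Real.exp (1 / |t|)) →
      (∫ ω, ∏ p ∈ (Finset.Icc 1 ⌊Real.exp (1 / |t|)⌋₊).filter Nat.Prime,
          (‖(1 + (f p ω : ℂ) *
              (p : ℂ) ^ (-(1 / 2 + (σ : ℂ) + (t : ℂ) * Complex.I))) /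
            (1 + (f p ω : ℂ) * (p : ℂ) ^ (-(1 / 2 + (σ : ℂ))))‖) ^ 2 ∂μ) ≤ C := by
  refine ⟨exp (96 * exp 2 * log 4), exp_pos _, fun t ht ht10 σ hσ _ => ?_⟩
  rw [log_exp] at hσ
  set L := 1 / |t|
  have hL : 10 ≤ L := by rw [le_div_iff₀ (abs_pos.2 ht)]; linarith
  have htL : t ^ 2 * L ^ 2 = 1 := by
    rw [← sq_abs, ← mul_pow, mul_one_div_cancel (abs_pos.2 ht).ne', one_pow]
  have hσ10 : -(1 / 10) ≤ σ := le_trans (by gcongr) hσ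
  have hprimes : (Icc 1 ⌊exp L⌋₊).filter Nat.Prime = Nat.primesLE ⌊exp L⌋₊ := by
    ext p
    simp only [mem_filter, mem_Icc, Nat.mem_primesLE]
    exact ⟨fun h => ⟨h.1.2, h.2⟩, fun h => ⟨⟨h.2.one_lt.le, h.1⟩, h.2⟩⟩
  rw [hprimes]
  refine (hf.integral_prod_comp (fun p => Nat.prime_of_mem_primesLE)
    (fun p => measurable_ratioSq _ _)).le.trans ?_
  set c : ℕ → ℝ := fun p => 16 * t ^ 2 * (log p ^ 2 * (p : ℝ) ^ (-(1 + 2 * σ)))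
  calc _ ≤ ∏ p ∈ Nat.primesLE ⌊exp L⌋₊, (1 + c p) :=
        prod_le_prod (fun p _ => by unfold ratioSq; positivity)
          fun p hp => eulerFactor_mean_le (Nat.two_le_of_mem_primesLE hp) hσ10 t
    _ ≤ exp (∑ p ∈ Nat.primesLE ⌊exp L⌋₊, c p) := prod_one_add_le_exp_sum _ fun p => by positivity
    _ ≤ exp (96 * exp 2 * log 4) := by
      rw [← mul_sum, exp_le_exp]
      calc _ ≤ 16 * t ^ 2 * (6 * exp 2 * log 4 * L ^ 2) := by
            gcongr
            exact sum_primesLE_log_sq_mul_rpow_le (by linarith) (Nat.floor_le (exp_pos L).le) hσ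
        _ = 96 * exp 2 * log 4 * (t ^ 2 * L ^ 2) := by ring
        _ = 96 * exp 2 * log 4 := by rw [htL, mul_one]

/-- With `z = exp(1/|t|)` and `−1/log z ≤ σ ≤ 1/log z`, the mean square of the ratio of
the shifted Euler product to the real-point Euler product over `p ≤ z` is `O(1)`. -/
theorem short_euler_product_ratio_bounded
    {Ω : Type*} [MeasurableSpace Ω] (μ : Measure Ω) [IsProbabilityMeasure μ]
    (f : ℕ → Ω → ℝ) (hf : IsRademacherSystem μ f) :
    ∃ C : ℝ, 0 < C ∧ ∀ t : ℝ, t ≠ 0 → |t| ≤ 1/10 →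
      ∀ σ : ℝ, -(1 / Real.log (Real.exp (1 / |t|))) ≤ σ →
        σ ≤ 1 / Real.log (Real.exp (1 / |t|)) →
      (∫ ω, ∏ p ∈ (Finset.Icc 1 ⌊Real.exp (1 / |t|)⌋₊).filter Nat.Prime,
          (‖(1 + (f p ω : ℂ) *
              (p : ℂ) ^ (-(1 / 2 + (σ : ℂ) + (t : ℂ) * Complex.I))) /
            (1 + (f p ω : ℂ) * (p : ℂ) ^ (-(1 / 2 + (σ : ℂ))))‖) ^ 2 ∂μ) ≤ C :=
  short_euler_product_ratio_bounded_general μ f hf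
end
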